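/- Let (L, [·,·], α) be a multiplicative Hom-Lie algebra over a field k of characteristic 0. Define the triple product [x,y,z] = [[x,y],α(z)]. Then L_T = (L, [·,·,·], α²) with both twisting maps equal to α² is a multiplicative Hom-Lie triple system. -/
import Mathlib


/-- The iterated bracket `[x,y,z] = [[x,y],α(z)]`. -/
def iterBracket {k L : Type*} [Field k] [AddCommGroup L] [Module k L]
    (b : L →ₗ[k] L →ₗ[k] L) (α : L →ₗ[k] L) (x y z : L) : L :=
  b (b x y) (α z)

/-- If `(L, [·,·], α)` is a multiplicative Hom-Lie algebra,
then `L_T = (L, [x,y,z] = [[x,y],α(z)], α²)` is a multiplicative Hom-Lie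
triple system. -/
theorem homLie_gives_homLie_triple_system
    {k L : Type*} [Field k] [CharZero k] [AddCommGroup L] [Module k L]
    (b : L →ₗ[k] L →ₗ[k] L) (α : L →ₗ[k] L)
    (hanti : ∀ x y : L, b x y = - b y x)
    (hjac : ∀ x y z : L,
      b (b x y) (α z) + b (b z x) (α y) + b (b y z) (α x) = 0)
    (hmul : ∀ x y : L, α (b x y) = b (α x) (α y)) :
    -- left anti-symmetry
    (∀ u v w : L, iterBracket b α u v w = - iterBracket b α v u w) ∧
    -- the ternary Jacobi identity
    (∀ u v w : L,
      iterBracket b α u v w + iterBracket b α w u v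
        + iterBracket b α v w u = 0) ∧
    -- the ternary Hom-Nambu identity with both twisting maps equal to α²
    (∀ u v w x y : L,
      iterBracket b α (α (α x)) (α (α y)) (iterBracket b α u v w)
        = iterBracket b α (iterBracket b α x y u) (α (α v)) (α (α w))
          + iterBracket b α (α (α u)) (iterBracket b α x y v) (α (α w))
          + iterBracket b α (α (α u)) (α (α v)) (iterBracket b α x y w)) ∧
    -- multiplicativity of L_T with respect to α²
    (∀ x y z : L,
      α (α (iterBracket b α x y z))
        = iterBracket b α (α (α x)) (α (α y)) (α (α z))) := by
  -- Key lemma (∗): [[αx,αy],[αu,αv]] = [[[x,y],αu],α²v] + [α²u,[[x,y],αv]]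
  have key : ∀ x y u v : L,
      b (b (α x) (α y)) (b (α u) (α v))
        = b (b (b x y) (α u)) (α (α v)) + b (α (α u)) (b (b x y) (α v)) := by
    intro x y u v
    have h := hjac (α u) (α v) (b x y)
    rw [add_assoc] at h
    have hA := add_eq_zero_iff_eq_neg.mp h
    -- LHS = - [[αu,αv], α[x,y]]
    have h1 : b (b (α x) (α y)) (b (α u) (α v))
        = - b (b (α u) (α v)) (α (b x y)) := by
      rw [← hmul, hanti]
    -- [α²u, [[x,y],αv]] = - [[[x,y],αv], α²u] = [[αv,[x,y]], α²u]
    have h2 : b (α (α u)) (b (b x y) (α v))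
        = b (b (α v) (b x y)) (α (α u)) := by
      rw [hanti (α v) (b x y), hanti (α (α u))]
      simp
    rw [h1, hA, h2, neg_neg]
  refine ⟨?_, ?_, ?_, ?_⟩
  · intro u v w
    simp only [iterBracket]
    rw [hanti u v]
    simp
  · intro u v w
    simpa [iterBracket] using hjac u v w
  · intro u v w x y
    simp only [iterBracket]
    have e1 : α (b (b u v) (α w)) = b (α (b u v)) (α (α w)) := hmul _ _
    rw [e1]
    have e2 := key (α x) (α y) (b u v) (α w)
    rw [e2]
    have e3 : b (b (α x) (α y)) (α (b u v)) = b (b (α x) (α y)) (b (α u) (α v)) := by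
      rw [hmul]
    -- first summand of e2's RHS, expanded via key again
    have e4 : b (b (b (α x) (α y)) (α (b u v))) (α (α (α w)))
        = b (b (b (b x y) (α u)) (α (α v))) (α (α (α w)))
          + b (b (α (α u)) (b (b x y) (α v))) (α (α (α w))) := by
      rw [e3, key x y u v, map_add, LinearMap.add_apply]
    rw [e4]
    have e5 : α (α (b u v)) = b (α (α u)) (α (α v)) := by rw [hmul, hmul]
    have e6 : α (b (b x y) (α w)) = b (b (α x) (α y)) (α (α w)) := by rw [hmul, hmul]
    rw [e5, e6, add_assoc]
  · intro x y z
    simp only [iterBracket, hmul]
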